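/- Any deterministic algorithm that decides T-interval connectivity of sequences of length δ using only queries that access graphs of the sequence (binary intersections of previously obtained graphs and connectivity tests) must, on some input, access every one of the δ graphs: formally, if an algorithm's output is determined by the multiset of graphs it accesses and there exists an index k never accessed on a T-interval connected input G₁, then the algorithm errs on the sequence obtained from G₁ by replacing G_k with a disconnected graph. -/

import Mathlib

/-- Intersection graph over the interval of indices `[a, b]`. -/
def IG {V : Type*} (G : ℕ → SimpleGraph V) (a b : ℕ) : SimpleGraph V :=
  ⨅ t ∈ Finset.Icc a b, G t

/-- `T`-interval connectivity of the sequence `G₁, …, G_δ`. -/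
def TIntervalConnected {V : Type*} (G : ℕ → SimpleGraph V) (δ T : ℕ) : Prop :=
  ∀ t, 1 ≤ t → t ≤ δ - T + 1 → (IG G t (t + T - 1)).Connected

theorem IG_le {V : Type*} (G : ℕ → SimpleGraph V) {a b k : ℕ} (hk : k ∈ Finset.Icc a b) :
    IG G a b ≤ G k :=
  iInf₂_le (f := fun t (_ : t ∈ Finset.Icc a b) => G t) k hk

theorem IG_eq_bot_of_mem {V : Type*} {G : ℕ → SimpleGraph V} {a b k : ℕ}
    (hk : k ∈ Finset.Icc a b) (hGk : G k = ⊥) : IG G a b = ⊥ :=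
  le_bot_iff.mp (hGk ▸ IG_le G hk)

/-- When `δ < T` the truncated subtraction makes `δ - T + 1 = 1`, and the single window
`[1, T]` still contains every `k ≤ δ`. -/
theorem exists_window_mem_Icc {δ T k : ℕ} (hT : 1 ≤ T) (hk1 : 1 ≤ k) (hkδ : k ≤ δ) :
    ∃ t, 1 ≤ t ∧ t ≤ δ - T + 1 ∧ k ∈ Finset.Icc t (t + T - 1) :=
  ⟨min k (δ - T + 1), by omega, min_le_right _ _, Finset.mem_Icc.mpr ⟨min_le_left _ _, by omega⟩⟩

theorem not_TIntervalConnected_of_eq_bot {V : Type*} [Nontrivial V] {G : ℕ → SimpleGraph V}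
    {δ T k : ℕ} (hT : 1 ≤ T) (hk1 : 1 ≤ k) (hkδ : k ≤ δ) (hGk : G k = ⊥) :
    ¬ TIntervalConnected G δ T := by
  intro hG
  obtain ⟨t, ht1, htδ, hk⟩ := exists_window_mem_Icc hT hk1 hkδ
  have hconn := hG t ht1 htδ
  rw [IG_eq_bot_of_mem hk hGk] at hconn
  exact SimpleGraph.not_connected_bot hconn

theorem apply_update_eq_of_notMem {α β γ : Type*} [DecidableEq α] {f : (α → β) → γ} {S : Set α}
    (hf : ∀ G G' : α → β, (∀ i ∈ S, G i = G' i) → f G = f G') (G : α → β) {k : α} (hkS : k ∉ S)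
    (x : β) : f (Function.update G k x) = f G :=
  hf _ _ fun _ hi => Function.update_of_ne (ne_of_mem_of_not_mem hi hkS) x G

theorem stmt11_general {V : Type*} [Nontrivial V]
    (δ T : ℕ) (hT : 1 ≤ T)
    (f : (ℕ → SimpleGraph V) → Bool) (S : Set ℕ)
    (hf : ∀ G G' : ℕ → SimpleGraph V, (∀ i ∈ S, G i = G' i) → f G = f G')
    (G₁ : ℕ → SimpleGraph V) (k : ℕ)
    (hk1 : 1 ≤ k) (hkδ : k ≤ δ) (hkS : k ∉ S)
    (hout : f G₁ = true) :
    f (Function.update G₁ k ⊥) = true ∧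
      ¬ TIntervalConnected (Function.update G₁ k ⊥) δ T :=
  ⟨(apply_update_eq_of_notMem hf G₁ hkS ⊥).trans hout,
    not_TIntervalConnected_of_eq_bot hT hk1 hkδ (Function.update_self k ⊥ G₁)⟩

theorem stmt11 {V : Type*} [Nontrivial V]
    (δ T : ℕ) (hT : 1 ≤ T) (hTδ : T ≤ δ)
    (f : (ℕ → SimpleGraph V) → Bool) (S : Set ℕ)
    (hf : ∀ G G' : ℕ → SimpleGraph V, (∀ i ∈ S, G i = G' i) → f G = f G')
    (G₁ : ℕ → SimpleGraph V) (k : ℕ)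
    (hk1 : 1 ≤ k) (hkδ : k ≤ δ) (hkS : k ∉ S)
    (hG₁ : TIntervalConnected G₁ δ T) (hout : f G₁ = true) :
    f (Function.update G₁ k ⊥) = true ∧
      ¬ TIntervalConnected (Function.update G₁ k ⊥) δ T :=
  stmt11_general δ T hT f S hf G₁ k hk1 hkδ hkS hout
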